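/- Let A be a CME generator matrix on a finite state set X partitioned into J and J' = X \ J with blocks A_JJ, A_JJ', A_J'J, A_J'J', and let Ã_JJ := A_JJ + diag(1ᵀ A_J'J) be the compressed generator. Let p(t) = e^{(t−t_n)A} p(t_n) be the solution of the full master equation on [t_n, t_{n+1}] from an entrywise nonnegative p(t_n), with restrictions p_J(t), p_J'(t), and let p̂_J(t) solve the compressed dynamics d/dt p̂_J = Ã_JJ p̂_J on [t_n, t_{n+1}] with p̂_J(t_n) = p_J(t_n). Then the local model error ε(t) := p_J(t) − p̂_J(t) satisfies ‖ε(t_{n+1})‖₁ ≤ ∫_{t_n}^{t_{n+1}} ( 1ᵀ A_JJ' p_J'(s) + 1ᵀ A_J'J p̂_J(s) ) ds, i.e., it is bounded by the time integral of the incoming boundary flux of the true solution plus the outgoing boundary flux of the compressed solution. -/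

import Mathlib

open Matrix BigOperators

section Helpers

open NormedSpace

variable {n : Type} [Fintype n] [DecidableEq n]

private lemma expEntry_hasDerivAt (M : Matrix n n ℝ) (t : ℝ) (i j : n) :
    HasDerivAt (fun s : ℝ => exp (s • M) i j) ((M * exp (t • M)) i j) t := by
  letI : SeminormedRing (Matrix n n ℝ) := Matrix.linftyOpSemiNormedRing
  letI : NormedRing (Matrix n n ℝ) := Matrix.linftyOpNormedRing
  letI : NormedAlgebra ℝ (Matrix n n ℝ) := Matrix.linftyOpNormedAlgebra
  have h : HasDerivAt (fun u : ℝ => exp (u • M)) (M * exp (t • M)) t :=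
    hasDerivAt_exp_smul_const' M t
  have hL : Continuous (fun N : Matrix n n ℝ => N i j) :=
    (continuous_apply j).comp (continuous_apply i)
  let L : Matrix n n ℝ →L[ℝ] ℝ :=
    { toFun := fun N => N i j, map_add' := fun _ _ => rfl, map_smul' := fun _ _ => rfl,
      cont := hL }
  exact L.hasFDerivAt.comp_hasDerivAt t h

private lemma pow_entry_nonneg {M : Matrix n n ℝ} (hM : ∀ i j, 0 ≤ M i j) :
    ∀ (k : ℕ) (i j : n), 0 ≤ (M ^ k) i j := by
  intro k
  induction k with
  | zero => intro i j; simp [Matrix.one_apply]; positivity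
  | succ k ih =>
      intro i j
      rw [pow_succ, Matrix.mul_apply]
      exact Finset.sum_nonneg fun x _ => mul_nonneg (ih i x) (hM x j)

private lemma exp_entry_nonneg_of_nonneg {M : Matrix n n ℝ} (hM : ∀ i j, 0 ≤ M i j) (i j : n) :
    0 ≤ exp M i j := by
  letI : SeminormedRing (Matrix n n ℝ) := Matrix.linftyOpSemiNormedRing
  letI : NormedRing (Matrix n n ℝ) := Matrix.linftyOpNormedRing
  letI : NormedAlgebra ℝ (Matrix n n ℝ) := Matrix.linftyOpNormedAlgebra
  have hs : HasSum (fun k : ℕ => ((k.factorial : ℝ)⁻¹ • M ^ k)) (exp M) := by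
    rw [exp_eq_tsum ℝ]
    exact (expSeries_summable' (𝕂 := ℝ) M).hasSum
  have hL : Continuous (fun N : Matrix n n ℝ => N i j) :=
    (continuous_apply j).comp (continuous_apply i)
  have h2 : HasSum (fun k : ℕ => ((k.factorial : ℝ)⁻¹ • M ^ k) i j) (exp M i j) :=
    hs.map (AddMonoidHom.mk' (fun N : Matrix n n ℝ => N i j) (fun _ _ => rfl)) hL
  refine h2.nonneg fun k => ?_
  have : ((k.factorial : ℝ)⁻¹ • M ^ k) i j = (k.factorial : ℝ)⁻¹ * (M ^ k) i j := rfl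
  rw [this]
  exact mul_nonneg (by positivity) (pow_entry_nonneg hM k i j)

private lemma exp_entry_nonneg_of_metzler {M : Matrix n n ℝ} (hM : ∀ i j, i ≠ j → 0 ≤ M i j)
    (i j : n) : 0 ≤ exp M i j := by
  classical
  set c : ℝ := ∑ k, |M k k| with hc
  have hck : ∀ k, -M k k ≤ c := by
    intro k
    calc -M k k ≤ |M k k| := neg_le_abs _
    _ ≤ c := Finset.single_le_sum (f := fun k => |M k k|) (fun x _ => abs_nonneg _)
        (Finset.mem_univ k)
  have hN : ∀ a b, 0 ≤ (M + c • (1 : Matrix n n ℝ)) a b := by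
    intro a b
    by_cases hab : a = b
    · subst hab
      simp only [Matrix.add_apply, Matrix.smul_apply, Matrix.one_apply_eq, smul_eq_mul, mul_one]
      linarith [hck a]
    · simp only [Matrix.add_apply, Matrix.smul_apply, Matrix.one_apply_ne hab, smul_eq_mul,
        mul_zero, add_zero]
      exact hM a b hab
  have hsplit : exp M
      = exp (M + c • (1 : Matrix n n ℝ)) * exp ((-c) • (1 : Matrix n n ℝ)) := by
    rw [← Matrix.exp_add_of_commute]
    · congr 1
      module
    · exact (Commute.one_right _).smul_right (-c)
  have hdiag : exp ((-c) • (1 : Matrix n n ℝ))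
      = Matrix.diagonal (fun _ : n => Real.exp (-c)) := by
    have hpi : exp (fun _ : n => (-c)) = fun _ : n => Real.exp (-c) := by
      rw [Pi.exp_def]
      funext k
      exact (congrFun Real.exp_eq_exp_ℝ (-c)).symm
    rw [Matrix.smul_one_eq_diagonal, Matrix.exp_diagonal, hpi]
  rw [hsplit, hdiag, Matrix.mul_diagonal]
  exact mul_nonneg (exp_entry_nonneg_of_nonneg hN i j) (Real.exp_nonneg _)

omit [Fintype n] [DecidableEq n] in
private lemma smul_metzler {M : Matrix n n ℝ} (hM : ∀ i j, i ≠ j → 0 ≤ M i j) {t : ℝ}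
    (ht : 0 ≤ t) : ∀ i j, i ≠ j → 0 ≤ (t • M) i j := fun i j hij => by
  simpa using mul_nonneg ht (hM i j hij)

private lemma exp_colsum_le_one {M : Matrix n n ℝ} (hM : ∀ i j, i ≠ j → 0 ≤ M i j)
    (hcs : ∀ j, ∑ i, M i j ≤ 0) {t : ℝ} (ht : 0 ≤ t) (j : n) :
    ∑ i, exp (t • M) i j ≤ 1 := by
  set f : ℝ → ℝ := fun s => ∑ i, exp (s • M) i j with hf
  have hderiv : ∀ s : ℝ, HasDerivAt f (∑ i, (M * exp (s • M)) i j) s := fun s =>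
    HasDerivAt.fun_sum fun i _ => expEntry_hasDerivAt M s i j
  have hf0 : f 0 = 1 := by
    simp [hf, zero_smul, exp_zero, Matrix.one_apply, Finset.sum_ite_eq]
  have hmono : AntitoneOn f (Set.Icc 0 t) := by
    apply antitoneOn_of_deriv_nonpos (convex_Icc 0 t)
    · exact fun s _ => ((hderiv s).continuousAt).continuousWithinAt
    · intro s _
      exact (hderiv s).differentiableAt.differentiableWithinAt
    · intro s hs
      rw [interior_Icc] at hs
      rw [(hderiv s).deriv]
      have hsnn : 0 ≤ s := le_of_lt hs.1
      have hswap : ∑ i, (M * exp (s • M)) i j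
          = ∑ k, (∑ i, M i k) * exp (s • M) k j := by
        simp_rw [Matrix.mul_apply, Finset.sum_mul]
        exact Finset.sum_comm
      rw [hswap]
      apply Finset.sum_nonpos
      intro k _
      exact mul_nonpos_of_nonpos_of_nonneg (hcs k)
        (exp_entry_nonneg_of_metzler (smul_metzler hM hsnn) k j)
  calc f t ≤ f 0 := hmono (Set.left_mem_Icc.mpr ht) (Set.right_mem_Icc.mpr ht) ht
  _ = 1 := hf0

private lemma exp_smul_mul_self_comm (M : Matrix n n ℝ) (c : ℝ) :
    M * exp (c • M) = exp (c • M) * M :=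
  (((Commute.refl M).smul_left c).exp_left).eq.symm

private lemma exp_smul_add_self (M : Matrix n n ℝ) (a b : ℝ) :
    exp ((a + b) • M) = exp (a • M) * exp (b • M) := by
  rw [add_smul]
  exact Matrix.exp_add_of_commute _ _
    (((Commute.refl M).smul_left a).smul_right b)

set_option linter.unusedSectionVars false in
private lemma l1_contraction {E : Matrix n n ℝ} (hE : ∀ i j, 0 ≤ E i j)
    (hcs : ∀ j, ∑ i, E i j ≤ 1) (v : n → ℝ) :
    ∑ i, |∑ j, E i j * v j| ≤ ∑ j, |v j| := by
  calc ∑ i, |∑ j, E i j * v j| ≤ ∑ i, ∑ j, E i j * |v j| := by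
        refine Finset.sum_le_sum fun i _ => ?_
        refine (Finset.abs_sum_le_sum_abs _ _).trans (le_of_eq ?_)
        refine Finset.sum_congr rfl fun j _ => ?_
        rw [abs_mul, abs_of_nonneg (hE i j)]
  _ = ∑ j, (∑ i, E i j) * |v j| := by
        rw [Finset.sum_comm]
        simp_rw [Finset.sum_mul]
  _ ≤ ∑ j, |v j| := by
        refine Finset.sum_le_sum fun j _ => ?_
        calc (∑ i, E i j) * |v j| ≤ 1 * |v j| :=
              mul_le_mul_of_nonneg_right (hcs j) (abs_nonneg _)
        _ = |v j| := one_mul _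

set_option linter.unusedSectionVars false in
private lemma mul_mulVec_comm_sum {M E : Matrix n n ℝ} (hME : M * E = E * M) (j : n)
    (v : n → ℝ) :
    ∑ k, E j k * (∑ m, M k m * v m) = ∑ k, (M * E) j k * v k := by
  calc ∑ k, E j k * ∑ m, M k m * v m
      = ∑ k, ∑ m, E j k * M k m * v m := by simp_rw [Finset.mul_sum, mul_assoc]
  _ = ∑ m, (∑ k, E j k * M k m) * v m := by
        rw [Finset.sum_comm]
        simp_rw [Finset.sum_mul]
  _ = ∑ m, (E * M) j m * v m := by simp_rw [Matrix.mul_apply]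
  _ = ∑ k, (M * E) j k * v k := by rw [hME]

end Helpers

/-- **Local model error bound for the compressed FSP dynamics.** Let `A` be a CME
generator on `X` partitioned into `J` and `J' = X \ J`, let
`Ã_JJ := A_JJ + diag(1ᵀ A_{J'J})` be the compressed generator, let
`p(t) = e^{(t - t_n)A} p(t_n)` be the full CME solution on `[t_n, t_{n+1}]` from an
entrywise nonnegative `p(t_n)`, and let `p̂_J` solve `d/dt p̂_J = Ã_JJ p̂_J` with
`p̂_J(t_n) = p_J(t_n)`. Then the local model error `ε(t) := p_J(t) - p̂_J(t)` satisfies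
`‖ε(t_{n+1})‖₁ ≤ ∫_{t_n}^{t_{n+1}} (1ᵀ A_{JJ'} p_{J'}(s) + 1ᵀ A_{J'J} p̂_J(s)) ds`. -/
theorem local_model_error_bound
    (X : Type) [Fintype X] [DecidableEq X]
    (A : Matrix X X ℝ)
    (hoff : ∀ i j, i ≠ j → 0 ≤ A i j)
    (hdiag : ∀ i, A i i ≤ 0)
    (hcol : ∀ j, ∑ i, A i j = 0)
    (J : Set X) [DecidablePred (· ∈ J)]
    (tn tnp1 : ℝ) (htn : tn ≤ tnp1)
    (pn : X → ℝ) (hpn : ∀ x, 0 ≤ pn x)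
    (p : ℝ → X → ℝ)
    (hp : ∀ t, p t = (NormedSpace.exp ((t - tn) • A)).mulVec pn)
    (Atil : Matrix J J ℝ)
    (hAtil : Atil = A.submatrix (Subtype.val : J → X) Subtype.val +
      Matrix.diagonal (fun x : J => ∑ i : {y : X // y ∉ J}, A i.val x.val))
    (phat : ℝ → J → ℝ)
    (hphat_init : phat tn = fun j : J => p tn j.val)
    (hphat_ode : ∀ t ∈ Set.Icc tn tnp1, HasDerivAt phat (Atil.mulVec (phat t)) t) :
    ∑ j : J, |p tnp1 j.val - phat tnp1 j| ≤
      ∫ s in tn..tnp1,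
        ((∑ i : J, ∑ j' : {y : X // y ∉ J}, A i.val j'.val * p s j'.val) +
         (∑ i' : {y : X // y ∉ J}, ∑ j : J, A i'.val j.val * phat s j)) := by
  classical
  set AJJ : Matrix J J ℝ := Matrix.of (fun i j : J => A i.val j.val) with hAJJ
  set d : J → ℝ := fun j => ∑ i' : {y : X // y ∉ J}, A i'.val j.val with hd
  set g : ℝ → J → ℝ :=
    fun s k => (∑ k' : {y : X // y ∉ J}, A k.val k'.val * p s k'.val) - d k * phat s k with hg
  set F : ℝ → Matrix J J ℝ := fun s => NormedSpace.exp ((tnp1 - s) • AJJ) with hF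
  set eps : ℝ → J → ℝ := fun s j => p s j.val - phat s j with heps
  have hd_nonneg : ∀ j : J, 0 ≤ d j := by
    intro j
    refine Finset.sum_nonneg fun i' _ => hoff i'.val j.val ?_
    intro h
    exact i'.property (h ▸ j.property)
  have hAJJ_metzler : ∀ i j : J, i ≠ j → 0 ≤ AJJ i j := by
    intro i j hij
    exact hoff i.val j.val (fun h => hij (Subtype.ext h))
  have hsum_split : ∀ f : X → ℝ,
      (∑ i : J, f i.val) + (∑ i : {y : X // y ∉ J}, f i.val) = ∑ i, f i := by
    intro f
    exact Fintype.sum_subtype_add_sum_subtype (· ∈ J) f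
  have hAJJ_colsum : ∀ j : J, ∑ i : J, AJJ i j ≤ 0 := by
    intro j
    have h := hsum_split (fun x => A x j.val)
    have h2 : ∑ i : J, AJJ i j = - d j := by
      simp only [hAJJ, Matrix.of_apply, hd]
      linarith [h, hcol j.val]
    rw [h2]
    linarith [hd_nonneg j]
  have hAtil_metzler : ∀ i j : J, i ≠ j → 0 ≤ Atil i j := by
    intro i j hij
    rw [hAtil]
    simp only [Matrix.add_apply, Matrix.submatrix_apply, Matrix.diagonal_apply_ne _ hij, add_zero]
    exact hoff i.val j.val (fun h => hij (Subtype.ext h))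
  -- derivative of p, componentwise
  have hp_deriv : ∀ (t : ℝ) (x : X),
      HasDerivAt (fun s => p s x) (A.mulVec (p t) x) t := by
    intro t x
    have h1 : HasDerivAt (fun s : ℝ => s - tn) 1 t := (hasDerivAt_id t).sub_const tn
    have hsum : HasDerivAt
        (fun s : ℝ => ∑ k, NormedSpace.exp ((s - tn) • A) x k * pn k)
        (∑ k, (A * NormedSpace.exp ((t - tn) • A)) x k * pn k) t := by
      refine HasDerivAt.fun_sum fun k _ => ?_
      have h2 := (expEntry_hasDerivAt A (t - tn) x k).comp t h1
      simpa using h2.mul_const (pn k)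
    have hEq : (fun s : ℝ => p s x)
        = fun s => ∑ k, NormedSpace.exp ((s - tn) • A) x k * pn k := by
      funext s
      rw [hp s]
      rfl
    have hEq2 : A.mulVec (p t) x = ∑ k, (A * NormedSpace.exp ((t - tn) • A)) x k * pn k := by
      rw [hp t, Matrix.mulVec_mulVec]
      rfl
    rw [hEq, hEq2]
    exact hsum
  have hp_cont : ∀ x : X, Continuous fun s => p s x := fun x =>
    continuous_iff_continuousAt.mpr fun t => (hp_deriv t x).continuousAt
  have hp_nonneg : ∀ t : ℝ, tn ≤ t → ∀ x : X, 0 ≤ p t x := by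
    intro t ht x
    rw [hp t]
    refine Finset.sum_nonneg fun k _ => mul_nonneg ?_ (hpn k)
    exact exp_entry_nonneg_of_metzler (smul_metzler hoff (by linarith)) x k
  have hphat_deriv : ∀ t ∈ Set.Icc tn tnp1, ∀ k : J,
      HasDerivAt (fun s => phat s k) (Atil.mulVec (phat t) k) t := by
    intro t ht k
    exact hasDerivAt_pi.mp (hphat_ode t ht) k
  have hphat_cont : ∀ k : J, ContinuousOn (fun s => phat s k) (Set.Icc tn tnp1) :=
    fun k s hs => ((hphat_deriv s hs k).continuousAt).continuousWithinAt
  -- representation of phat on the interval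
  have hphat_rep : ∀ s ∈ Set.Icc tn tnp1,
      phat s = (NormedSpace.exp ((s - tn) • Atil)).mulVec (phat tn) := by
    intro s hs
    set G : ℝ → Matrix J J ℝ := fun u => NormedSpace.exp ((tn - u) • Atil) with hG
    have hG_deriv : ∀ (u : ℝ) (j k : J),
        HasDerivAt (fun w => G w j k) (-((Atil * G u) j k)) u := by
      intro u j k
      have h1 : HasDerivAt (fun w : ℝ => tn - w) (-1) u := by
        simpa using (hasDerivAt_id u).const_sub tn
      have h2 := (expEntry_hasDerivAt Atil (tn - u) j k).comp u h1
      simpa [hG, mul_comm, Function.comp_def] using h2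
    have hw_deriv : ∀ u ∈ Set.Icc tn tnp1, ∀ j : J,
        HasDerivAt (fun w => ∑ k, G w j k * phat w k) 0 u := by
      intro u hu j
      have hprod : HasDerivAt (fun w => ∑ k, G w j k * phat w k)
          (∑ k, (-((Atil * G u) j k) * phat u k + G u j k * Atil.mulVec (phat u) k)) u :=
        HasDerivAt.fun_sum fun k _ => (hG_deriv u j k).mul (hphat_deriv u hu k)
      have hzero : ∑ k, (-((Atil * G u) j k) * phat u k + G u j k * Atil.mulVec (phat u) k)
          = 0 := by
        rw [Finset.sum_add_distrib]
        have hcomm : Atil * G u = G u * Atil := exp_smul_mul_self_comm Atil (tn - u)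
        have h1 : ∑ k, G u j k * Atil.mulVec (phat u) k
            = ∑ k, (Atil * G u) j k * phat u k := by
          have := mul_mulVec_comm_sum hcomm j (phat u)
          simpa [Matrix.mulVec, dotProduct] using this
        rw [h1]
        simp [neg_mul, Finset.sum_neg_distrib]
      rw [hzero] at hprod
      exact hprod
    have hwcont : ∀ j : J, ContinuousOn (fun w => ∑ k, G w j k * phat w k)
        (Set.Icc tn tnp1) := by
      intro j
      refine continuousOn_finset_sum _ fun k _ => ?_
      exact (continuous_iff_continuousAt.mpr fun u =>
        (hG_deriv u j k).continuousAt).continuousOn.mul (hphat_cont k)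
    have hconst : ∀ j : J, (∑ k, G s j k * phat s k) = ∑ k, G tn j k * phat tn k := by
      intro j
      exact constant_of_has_deriv_right_zero (hwcont j)
        (fun x hx => (hw_deriv x ⟨hx.1, le_of_lt hx.2⟩ j).hasDerivWithinAt) s hs
    have hGtn : G tn = 1 := by
      rw [hG]
      simp [NormedSpace.exp_zero]
    have hGs : (G s).mulVec (phat s) = phat tn := by
      funext j
      have := hconst j
      rw [hGtn] at this
      simp only [Matrix.mulVec, dotProduct]
      rw [this]
      simp [Matrix.one_apply]
    calc phat s = (1 : Matrix J J ℝ).mulVec (phat s) := by rw [Matrix.one_mulVec]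
    _ = (NormedSpace.exp ((s - tn) • Atil) * G s).mulVec (phat s) := by
        rw [hG, ← exp_smul_add_self]
        norm_num [NormedSpace.exp_zero]
    _ = (NormedSpace.exp ((s - tn) • Atil)).mulVec ((G s).mulVec (phat s)) := by
        rw [Matrix.mulVec_mulVec]
    _ = (NormedSpace.exp ((s - tn) • Atil)).mulVec (phat tn) := by rw [hGs]
  have hphat_nonneg : ∀ s ∈ Set.Icc tn tnp1, ∀ k : J, 0 ≤ phat s k := by
    intro s hs k
    rw [hphat_rep s hs]
    refine Finset.sum_nonneg fun m _ => mul_nonneg ?_ ?_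
    · exact exp_entry_nonneg_of_metzler (smul_metzler hAtil_metzler (by linarith [hs.1])) k m
    · rw [hphat_init]
      exact hp_nonneg tn le_rfl m.val
  -- derivative of eps
  have heps_deriv : ∀ t ∈ Set.Icc tn tnp1, ∀ j : J,
      HasDerivAt (fun s => eps s j) ((∑ k : J, AJJ j k * eps t k) + g t j) t := by
    intro t ht j
    have h3 := (hp_deriv t j.val).sub (hphat_deriv t ht j)
    have e1 : A.mulVec (p t) j.val
        = (∑ k : J, AJJ j k * p t k.val)
          + ∑ k' : {y : X // y ∉ J}, A j.val k'.val * p t k'.val := by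
      have h := hsum_split (fun x => A j.val x * p t x)
      simp only [Matrix.mulVec, dotProduct]
      rw [← h]
      rfl
    have e2 : Atil.mulVec (phat t) j = (∑ k : J, AJJ j k * phat t k) + d j * phat t j := by
      rw [hAtil]
      have hdiagsum : ∑ k : J, Matrix.diagonal d j k * phat t k = d j * phat t j := by
        rw [Finset.sum_eq_single j]
        · rw [Matrix.diagonal_apply_eq]
        · intro k _ hk
          rw [Matrix.diagonal_apply_ne _ (Ne.symm hk), zero_mul]
        · intro h
          exact absurd (Finset.mem_univ j) h
      simp only [Matrix.mulVec, dotProduct, Matrix.add_apply, Matrix.submatrix_apply,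
        add_mul, Finset.sum_add_distrib]
      rw [hdiagsum]
      rfl
    have e3 : A.mulVec (p t) j.val - Atil.mulVec (phat t) j
        = (∑ k : J, AJJ j k * eps t k) + g t j := by
      rw [e1, e2]
      simp only [heps, hg, mul_sub]
      rw [Finset.sum_sub_distrib]
      ring
    rw [← e3]
    exact h3
  -- F facts
  have hF_deriv : ∀ (s : ℝ) (j k : J),
      HasDerivAt (fun u => F u j k) (-((AJJ * F s) j k)) s := by
    intro s j k
    have h1 : HasDerivAt (fun u : ℝ => tnp1 - u) (-1) s := by
      simpa using (hasDerivAt_id s).const_sub tnp1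
    have h2 := (expEntry_hasDerivAt AJJ (tnp1 - s) j k).comp s h1
    simpa [hF, mul_comm, Function.comp_def] using h2
  have hF_cont : ∀ j k : J, Continuous fun s => F s j k := fun j k =>
    continuous_iff_continuousAt.mpr fun t => (hF_deriv t j k).continuousAt
  have hF_nonneg : ∀ s ∈ Set.Icc tn tnp1, ∀ j k : J, 0 ≤ F s j k := by
    intro s hs j k
    exact exp_entry_nonneg_of_metzler (smul_metzler hAJJ_metzler (by linarith [hs.2])) j k
  have hF_colsum : ∀ s ∈ Set.Icc tn tnp1, ∀ k : J, ∑ j : J, F s j k ≤ 1 := by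
    intro s hs k
    exact exp_colsum_le_one hAJJ_metzler hAJJ_colsum (by linarith [hs.2]) k
  -- continuity of g and the integrand
  have hg_cont : ∀ k : J, ContinuousOn (fun s => g s k) (Set.Icc tn tnp1) := by
    intro k
    apply ContinuousOn.sub
    · exact (continuous_finset_sum _ fun k' _ =>
        continuous_const.mul (hp_cont k'.val)).continuousOn
    · exact continuousOn_const.mul (hphat_cont k)
  have hFg_cont : ∀ j : J, ContinuousOn (fun s => ∑ k, F s j k * g s k)
      (Set.Icc tn tnp1) := by
    intro j
    exact continuousOn_finset_sum _ fun k _ => ((hF_cont j k).continuousOn).mul (hg_cont k)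
  have hFg_int : ∀ j : J, IntervalIntegrable (fun s => ∑ k, F s j k * g s k)
      MeasureTheory.volume tn tnp1 := by
    intro j
    exact ((hFg_cont j).mono (by rw [Set.uIcc_of_le htn])).intervalIntegrable
  -- Duhamel formula
  have hduhamel : ∀ j : J,
      eps tnp1 j = ∫ s in tn..tnp1, ∑ k, F s j k * g s k := by
    intro j
    have hh_deriv : ∀ u ∈ Set.uIcc tn tnp1,
        HasDerivAt (fun w => ∑ k, F w j k * eps w k) (∑ k, F u j k * g u k) u := by
      intro u hu
      rw [Set.uIcc_of_le htn] at hu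
      have hprod : HasDerivAt (fun w => ∑ k, F w j k * eps w k)
          (∑ k, (-((AJJ * F u) j k) * eps u k
            + F u j k * ((∑ m : J, AJJ k m * eps u m) + g u k))) u :=
        HasDerivAt.fun_sum fun k _ => (hF_deriv u j k).mul (heps_deriv u hu k)
      have hkey : ∑ k, (-((AJJ * F u) j k) * eps u k
          + F u j k * ((∑ m : J, AJJ k m * eps u m) + g u k))
          = ∑ k, F u j k * g u k := by
        have hcomm : AJJ * F u = F u * AJJ := exp_smul_mul_self_comm AJJ (tnp1 - u)
        have h1 : ∑ k, F u j k * (∑ m : J, AJJ k m * eps u m)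
            = ∑ k, (AJJ * F u) j k * eps u k := mul_mulVec_comm_sum hcomm j (eps u)
        simp_rw [mul_add]
        rw [Finset.sum_add_distrib, Finset.sum_add_distrib, h1]
        simp [neg_mul]
      rw [hkey] at hprod
      exact hprod
    have hfund := intervalIntegral.integral_eq_sub_of_hasDerivAt hh_deriv
      (hFg_int j)
    have hepstn : ∀ k : J, eps tn k = 0 := by
      intro k
      simp [heps, hphat_init]
    have hFtnp1 : F tnp1 = 1 := by
      rw [hF]
      simp [NormedSpace.exp_zero]
    rw [hfund, hFtnp1]
    simp [Matrix.one_apply, hepstn, Finset.sum_ite_eq]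
  -- pointwise bound on the integrand
  have hpoint : ∀ s ∈ Set.Icc tn tnp1,
      (∑ j : J, |∑ k, F s j k * g s k|) ≤
        (∑ i : J, ∑ j' : {y : X // y ∉ J}, A i.val j'.val * p s j'.val) +
        (∑ i' : {y : X // y ∉ J}, ∑ j : J, A i'.val j.val * phat s j) := by
    intro s hs
    have hstep1 : (∑ j : J, |∑ k, F s j k * g s k|) ≤ ∑ k : J, |g s k| :=
      l1_contraction (fun i j => hF_nonneg s hs i j) (hF_colsum s hs) (g s)
    have hstep2 : ∑ k : J, |g s k| ≤
        ∑ k : J, ((∑ k' : {y : X // y ∉ J}, A k.val k'.val * p s k'.val)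
          + d k * phat s k) := by
      refine Finset.sum_le_sum fun k _ => ?_
      have ha : 0 ≤ ∑ k' : {y : X // y ∉ J}, A k.val k'.val * p s k'.val := by
        refine Finset.sum_nonneg fun k' _ => mul_nonneg ?_ (hp_nonneg s hs.1 k'.val)
        exact hoff k.val k'.val (fun h => k'.property (h ▸ k.property))
      have hb : 0 ≤ d k * phat s k := mul_nonneg (hd_nonneg k) (hphat_nonneg s hs k)
      calc |g s k| ≤ |∑ k' : {y : X // y ∉ J}, A k.val k'.val * p s k'.val|
            + |d k * phat s k| := abs_sub _ _
      _ = (∑ k' : {y : X // y ∉ J}, A k.val k'.val * p s k'.val) + d k * phat s k := by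
            rw [abs_of_nonneg ha, abs_of_nonneg hb]
    have hstep3 : ∑ k : J, ((∑ k' : {y : X // y ∉ J}, A k.val k'.val * p s k'.val)
          + d k * phat s k)
        = (∑ i : J, ∑ j' : {y : X // y ∉ J}, A i.val j'.val * p s j'.val) +
          (∑ i' : {y : X // y ∉ J}, ∑ j : J, A i'.val j.val * phat s j) := by
      rw [Finset.sum_add_distrib]
      congr 1
      simp_rw [hd, Finset.sum_mul]
      rw [Finset.sum_comm]
    linarith [hstep1, hstep2, hstep3.le, hstep3.ge]
  -- integrability of both sides
  have habs_int : ∀ j : J, IntervalIntegrable (fun s => |∑ k, F s j k * g s k|)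
      MeasureTheory.volume tn tnp1 := by
    intro j
    exact (((hFg_cont j).abs).mono (by rw [Set.uIcc_of_le htn])).intervalIntegrable
  have hsum_abs_int : IntervalIntegrable (fun s => ∑ j : J, |∑ k, F s j k * g s k|)
      MeasureTheory.volume tn tnp1 := by
    apply ContinuousOn.intervalIntegrable
    rw [Set.uIcc_of_le htn]
    exact continuousOn_finset_sum _ fun j _ => (hFg_cont j).abs
  have hrhs_int : IntervalIntegrable (fun s =>
      (∑ i : J, ∑ j' : {y : X // y ∉ J}, A i.val j'.val * p s j'.val) +
      (∑ i' : {y : X // y ∉ J}, ∑ j : J, A i'.val j.val * phat s j))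
      MeasureTheory.volume tn tnp1 := by
    apply ContinuousOn.intervalIntegrable
    rw [Set.uIcc_of_le htn]
    apply ContinuousOn.add
    · exact (continuous_finset_sum _ fun i _ => continuous_finset_sum _ fun j' _ =>
        continuous_const.mul (hp_cont j'.val)).continuousOn
    · exact continuousOn_finset_sum _ fun i' _ => continuousOn_finset_sum _ fun j _ =>
        continuousOn_const.mul (hphat_cont j)
  -- final chain
  calc ∑ j : J, |p tnp1 j.val - phat tnp1 j|
      = ∑ j : J, |∫ s in tn..tnp1, ∑ k, F s j k * g s k| := by
        refine Finset.sum_congr rfl fun j _ => ?_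
        rw [← hduhamel j]
  _ ≤ ∑ j : J, ∫ s in tn..tnp1, |∑ k, F s j k * g s k| :=
        Finset.sum_le_sum fun j _ =>
          intervalIntegral.abs_integral_le_integral_abs htn
  _ = ∫ s in tn..tnp1, ∑ j : J, |∑ k, F s j k * g s k| :=
        (intervalIntegral.integral_finset_sum fun j _ => habs_int j).symm
  _ ≤ ∫ s in tn..tnp1,
        ((∑ i : J, ∑ j' : {y : X // y ∉ J}, A i.val j'.val * p s j'.val) +
         (∑ i' : {y : X // y ∉ J}, ∑ j : J, A i'.val j.val * phat s j)) :=
        intervalIntegral.integral_mono_on htn hsum_abs_int hrhs_int hpoint
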